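/- arXiv:2301.03683 — 8 statements merged into one kernel-verified Lean document; each statement's English description precedes it below -/
import Mathlib

section
/- Let (g,γ) be a construction pair on an abelian group (X,+). Then for all x,y ∈ X and every integer i one has: g(0)=0, g(2x)=2g(x) and g(−x)=−g(x); γ(x,y) ∈ rad γ, 2x ∈ rad γ and 2γ(x,y)=0; the i-th iterate g^i maps rad γ bijectively onto rad γ and maps the image of γ bijectively onto the image of γ; g^i(x+y)=g^i(x)+g^i(y) whenever x ∈ rad γ or y ∈ rad γ; in particular g^i restricts to an automorphism of the subgroup rad γ. -/
/-- The radical of a symmetric mapping `γ : X × X → X`. -/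
def radical {X : Type*} [AddCommGroup X] (γ : X → X → X) : Set X :=
  {x | ∀ y, γ x y = 0}

/-- A construction pair `(g, γ)` on an abelian group `(X, +)`. -/
structure IsConstructionPair {X : Type*} [AddCommGroup X]
    (g : Equiv.Perm X) (γ : X → X → X) : Prop where
  symm : ∀ x y, γ x y = γ y x
  alt : ∀ x, γ x x = 0
  add_left : ∀ x y z, γ (x + y) z = γ x z + γ y z
  add_right : ∀ x y z, γ x (y + z) = γ x y + γ x z
  c1 : ∀ x y, g⁻¹ (g x + g y)
      = x + y + γ x y + g⁻¹ (γ x y) + g⁻¹ (g⁻¹ (γ x y))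
  c2 : ∀ x y z, γ (γ x y) z = 0
  c3 : ∀ x y, g⁻¹ (γ x y) = γ (g x) y

/-!
Biadditivity and alternation of `γ` give `2 • γ = 0` and, with (C2), put `2 • x` and every value
of `γ` in the radical. Axiom (C1) says that `g` is additive on pairs with `γ x y = 0`, and (C3)
that `g` and `g⁻¹` preserve the radical and the image of `γ`. The permutations preserving a set
`R` and additive against it form a subgroup; it contains `g`, hence every `g ^ i`.
-/

open MulAction Pointwise Set Equiv Perm

namespace Equiv.Perm

variable {α : Type*} {f : Perm α} {s : Set α}

lemma mem_stabilizer_set_iff : f ∈ stabilizer (Perm α) s ↔ ∀ a, f a ∈ s ↔ a ∈ s :=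
  mem_stabilizer_set

lemma mem_stabilizer_of_mapsTo (hf : MapsTo f s s) (hf_inv : MapsTo ⇑(f⁻¹) s s) :
    f ∈ stabilizer (Perm α) s :=
  mem_stabilizer_set_iff.2 fun a => ⟨fun ha => by simpa using hf_inv ha, fun ha => hf ha⟩

lemma bijOn_of_mem_stabilizer (hf : f ∈ stabilizer (Perm α) s) : BijOn f s s := by
  rw [mem_stabilizer_set_iff] at hf
  exact ⟨fun a ha => (hf a).2 ha, f.injective.injOn,
    fun b hb => ⟨f⁻¹ b, (hf _).1 (by simpa using hb), by simp⟩⟩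

variable {X : Type*} [AddGroup X]

def addStabilizer (R : Set X) : Subgroup (Perm X) where
  carrier := {f | f ∈ stabilizer (Perm X) R ∧ ∀ x, ∀ y ∈ R, f (x + y) = f x + f y}
  one_mem' := ⟨one_mem _, fun _ _ _ => rfl⟩
  mul_mem' := by
    rintro f f' ⟨hf, hf_add⟩ ⟨hf', hf'_add⟩
    refine ⟨mul_mem hf hf', fun x y hy => ?_⟩
    rw [coe_mul, Function.comp_apply, Function.comp_apply, Function.comp_apply, hf'_add x y hy,
      hf_add _ _ ((mem_stabilizer_set_iff.1 hf' y).2 hy)]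
  inv_mem' := by
    rintro f ⟨hf, hf_add⟩
    refine ⟨inv_mem hf, fun x y hy => f.injective ?_⟩
    rw [hf_add _ _ ((mem_stabilizer_set_iff.1 (inv_mem hf) y).2 hy)]
    simp

end Equiv.Perm

namespace IsConstructionPair

variable {X : Type*} [AddCommGroup X] {g : Perm X} {γ : X → X → X}
  (h : IsConstructionPair g γ)
include h

lemma gamma_zero_left (y : X) : γ 0 y = 0 := by
  simpa using h.add_left 0 0 y

lemma gamma_neg_right (x y : X) : γ x (-y) = -γ x y := by
  have hsum := h.add_right x y (-y)
  rw [add_neg_cancel, h.symm x 0, h.gamma_zero_left] at hsum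
  exact eq_neg_of_add_eq_zero_right hsum.symm

lemma two_nsmul_gamma (x y : X) : 2 • γ x y = 0 := by
  have hxy := h.alt (x + y)
  rwa [h.add_left, h.add_right, h.add_right, h.alt, h.alt, h.symm y x, zero_add, add_zero,
    ← two_nsmul] at hxy

lemma gamma_mem_radical (x y : X) : γ x y ∈ radical γ :=
  h.c2 x y

lemma two_nsmul_mem_radical (x : X) : 2 • x ∈ radical γ := fun y => by
  rw [two_nsmul, h.add_left, ← two_nsmul, h.two_nsmul_gamma]

lemma inv_apply_zero : g⁻¹ 0 = 0 := by
  simpa [h.gamma_zero_left, h.symm _ (g 0), h.alt] using h.c3 0 (g 0)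

lemma apply_zero : g 0 = 0 := by
  simpa using congrArg g h.inv_apply_zero.symm

lemma map_add_of_gamma_eq_zero {x y : X} (hxy : γ x y = 0) : g (x + y) = g x + g y := by
  simpa [hxy, h.inv_apply_zero, eq_comm] using congrArg g (h.c1 x y)

lemma map_add_of_mem_radical (x : X) {y : X} (hy : y ∈ radical γ) : g (x + y) = g x + g y :=
  h.map_add_of_gamma_eq_zero (by rw [h.symm, hy])

lemma map_two_nsmul (x : X) : g (2 • x) = 2 • g x := by
  rw [two_nsmul, two_nsmul, h.map_add_of_gamma_eq_zero (h.alt x)]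

lemma map_neg (x : X) : g (-x) = -g x := by
  have hx : g (x + -x) = g x + g (-x) :=
    h.map_add_of_gamma_eq_zero (by rw [h.gamma_neg_right, h.alt, neg_zero])
  rw [add_neg_cancel, h.apply_zero] at hx
  exact eq_neg_of_add_eq_zero_right hx.symm

lemma mapsTo_radical : MapsTo g (radical γ) (radical γ) := fun x hx y => by
  rw [← h.c3, hx, h.inv_apply_zero]

lemma gamma_inv_apply_left (x y : X) : γ (g⁻¹ x) y = g (γ x y) := by
  simpa using congrArg g (h.c3 (g⁻¹ x) y)

lemma mapsTo_inv_radical : MapsTo ⇑(g⁻¹) (radical γ) (radical γ) := fun x hx y => by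
  rw [h.gamma_inv_apply_left, hx, h.apply_zero]

lemma mem_addStabilizer_radical : g ∈ addStabilizer (radical γ) :=
  ⟨mem_stabilizer_of_mapsTo h.mapsTo_radical h.mapsTo_inv_radical,
    fun x _ hy => h.map_add_of_mem_radical x hy⟩

lemma mem_stabilizer_gamma_range : g ∈ stabilizer (Perm X) {z | ∃ x y, γ x y = z} :=
  mem_stabilizer_of_mapsTo (fun _ ⟨x, y, hz⟩ => ⟨g⁻¹ x, y, by rw [← hz, h.gamma_inv_apply_left]⟩)
    (fun _ ⟨x, y, hz⟩ => ⟨g x, y, by rw [← hz, h.c3]⟩)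

end IsConstructionPair

theorem stmt_0 {X : Type*} [AddCommGroup X] (g : Equiv.Perm X) (γ : X → X → X)
    (h : IsConstructionPair g γ) :
    g 0 = 0 ∧
    (∀ x : X, g (2 • x) = 2 • g x) ∧
    (∀ x : X, g (-x) = -(g x)) ∧
    (∀ x y : X, γ x y ∈ radical γ) ∧
    (∀ x : X, 2 • x ∈ radical γ) ∧
    (∀ x y : X, 2 • γ x y = 0) ∧
    (∀ i : ℤ, Set.BijOn (⇑(g ^ i)) (radical γ) (radical γ)) ∧
    (∀ i : ℤ, Set.BijOn (⇑(g ^ i)) {z | ∃ x y, γ x y = z} {z | ∃ x y, γ x y = z}) ∧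
    (∀ (i : ℤ) (x y : X), (x ∈ radical γ ∨ y ∈ radical γ) →
      (g ^ i) (x + y) = (g ^ i) x + (g ^ i) y) := by
  have hmem (i : ℤ) := zpow_mem h.mem_addStabilizer_radical i
  refine ⟨h.apply_zero, h.map_two_nsmul, h.map_neg, h.gamma_mem_radical,
    h.two_nsmul_mem_radical, h.two_nsmul_gamma, fun i => bijOn_of_mem_stabilizer (hmem i).1,
    fun i => bijOn_of_mem_stabilizer (zpow_mem h.mem_stabilizer_gamma_range i), ?_⟩
  rintro i x y (hx | hy)
  · rw [add_comm, (hmem i).2 y x hx, add_comm]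
  · exact (hmem i).2 x y hy
end

section
/- Let (g,γ) be a construction pair on an abelian group (X,+). Define γ' : X × X → X by γ'(x,y) = g(γ(x,y)). Then (g⁻¹, γ') is a construction pair on (X,+); that is, γ' is symmetric, alternating and biadditive, g(g⁻¹(x)+g⁻¹(y)) = x+y+γ'(x,y)+g(γ'(x,y))+g²(γ'(x,y)) for all x,y, γ'(γ'(x,y),z)=0 for all x,y,z, and g(γ'(x,y)) = γ'(g⁻¹(x),y) for all x,y. -/
/-
Every value of `γ` is `2`-torsion (expand `γ (a + b) (a + b)`) and is orthogonal to everything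
by (C2), so (C1) makes `g` additive on sums `u + γ a b`, while (C3) shows that `g` maps values of
`γ` to values of `γ`: `g (γ a b) = γ (g⁻¹ a) b`. With `c = γ x y`, (C1) at `g⁻¹ x, g⁻¹ y` reads
`g⁻¹ (x + y) = g⁻¹ x + g⁻¹ y + g² c + g c + c`; moving the torsion terms across gives
`g⁻¹ x + g⁻¹ y = g⁻¹ (x + y) + c + g c + g² c`, and applying `g` term by term is (C1) for the new
pair.
-/

theorem Equiv.Perm.apply_inv_self {α : Type*} (f : Equiv.Perm α) (x : α) : f (f⁻¹ x) = x :=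
  f.apply_symm_apply x

theorem Equiv.Perm.inv_apply_self {α : Type*} (f : Equiv.Perm α) (x : α) : f⁻¹ (f x) = x :=
  f.symm_apply_apply x

namespace IsConstructionPair

variable {X : Type*} [AddCommGroup X] {g : Equiv.Perm X} {γ : X → X → X}

theorem zero_left (h : IsConstructionPair g γ) (z : X) : γ 0 z = 0 := by
  have := h.add_left 0 0 z
  rwa [add_zero, left_eq_add] at this

theorem zero_right (h : IsConstructionPair g γ) (z : X) : γ z 0 = 0 := by
  rw [h.symm, h.zero_left]

theorem inv_map_zero (h : IsConstructionPair g γ) : g⁻¹ 0 = 0 := by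
  simpa [h.alt, h.zero_right] using h.c3 0 0

theorem map_zero (h : IsConstructionPair g γ) : g 0 = 0 :=
  (Equiv.Perm.inv_eq_iff_eq.mp h.inv_map_zero).symm

theorem add_self (h : IsConstructionPair g γ) (a b : X) : γ a b + γ a b = 0 := by
  simpa [h.add_left, h.add_right, h.alt, h.symm b a] using h.alt (a + b)

theorem apply_apply_right_eq_zero (h : IsConstructionPair g γ) (u a b : X) : γ u (γ a b) = 0 := by
  rw [h.symm, h.c2]

theorem map_add_of_apply_eq_zero (h : IsConstructionPair g γ) {a b : X} (hab : γ a b = 0) :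
    g (a + b) = g a + g b := by
  have := h.c1 a b
  rw [hab, h.inv_map_zero, h.inv_map_zero, add_zero, add_zero, add_zero] at this
  rw [← this, Equiv.Perm.apply_inv_self]

theorem map_add_apply (h : IsConstructionPair g γ) (u a b : X) :
    g (u + γ a b) = g u + g (γ a b) :=
  h.map_add_of_apply_eq_zero (h.apply_apply_right_eq_zero u a b)

theorem map_apply (h : IsConstructionPair g γ) (a b : X) : g (γ a b) = γ (g⁻¹ a) b := by
  have := h.c3 (g⁻¹ a) b
  rw [Equiv.Perm.apply_inv_self] at this
  rw [← this, Equiv.Perm.apply_inv_self]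

theorem inv_add_inv (h : IsConstructionPair g γ) (x y : X) :
    g⁻¹ x + g⁻¹ y = g⁻¹ (x + y) + γ x y + g (γ x y) + g (g (γ x y)) := by
  have hd : γ (g⁻¹ x) (g⁻¹ y) = g (g (γ x y)) := by
    rw [h.map_apply x y, h.symm (g⁻¹ x) y, h.map_apply, h.symm (g⁻¹ y)]
  have hc1 := h.c1 (g⁻¹ x) (g⁻¹ y)
  rw [Equiv.Perm.apply_inv_self, Equiv.Perm.apply_inv_self, hd, Equiv.Perm.inv_apply_self,
    Equiv.Perm.inv_apply_self] at hc1
  rw [h.map_apply x y, h.map_apply] at hc1 ⊢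
  linear_combination (norm := abel) -hc1 - h.add_self x y - h.add_self (g⁻¹ x) y
    - h.add_self (g⁻¹ (g⁻¹ x)) y

theorem inv (h : IsConstructionPair g γ) : IsConstructionPair g⁻¹ (fun x y => g (γ x y)) where
  symm x y := by rw [h.symm]
  alt x := by rw [h.alt, h.map_zero]
  add_left x y z := by rw [h.add_left, h.map_add_apply]
  add_right x y z := by rw [h.add_right, h.map_add_apply]
  c1 x y := by
    simp only [inv_inv, h.inv_add_inv, h.map_apply, h.map_add_apply, Equiv.Perm.apply_inv_self]
  c2 x y z := by rw [h.map_apply, Equiv.Perm.inv_apply_self, h.c2]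
  c3 x y := by rw [inv_inv, h.map_apply]

end IsConstructionPair

theorem stmt_2 {X : Type*} [AddCommGroup X] (g : Equiv.Perm X) (γ : X → X → X)
    (h : IsConstructionPair g γ) :
    IsConstructionPair g⁻¹ (fun x y => g (γ x y)) :=
  h.inv
end

section
/- Let (g,γ) be a construction pair on an abelian group (X,+), let n be an integer and x ∈ X. Then the following are equivalent: (i) ∑_{0≤k<|n|} g^k(x) ∈ rad γ; (ii) ∑_{k∈I(0,n)} g^{−k}(γ(x,y)) = 0 for all y ∈ X; (iii) ∑_{k∈I(i,i+n)} g^{−k}(γ(x,y)) = 0 for all y ∈ X and all integers i. -/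
/-- The interval `I(i,j)` of integers: `∅` if `i = j`, `{i,…,j-1}` if `i < j`,
and `{j,…,i-1}` if `j < i`. -/
noncomputable def I (i j : ℤ) : Finset ℤ := Finset.Ico (min i j) (max i j)

/-!
By (C3), `γ (g^m a) y = g^(-m) (γ a y)` for every integer `m`. Hence, writing
`S = ∑_{0≤k<|n|} g^k x`, each sum `∑_{k ∈ I(i,i+n)} g^(-k) (γ x y)` equals
`γ S (g^(min i (i+n)) y)`. As `g^(min i (i+n))` is a bijection, this vanishes for all `y`
exactly when `S ∈ rad γ`, whatever `i` is; so (i), (ii) (the case `i = 0`) and (iii) agree.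
-/

namespace IsConstructionPair

variable {X : Type*} [AddCommGroup X] {g : Equiv.Perm X} {γ : X → X → X}

theorem apply_left (h : IsConstructionPair g γ) (a y : X) : γ (g a) y = g⁻¹ (γ a y) :=
  (h.c3 a y).symm

theorem inv_apply_left (h : IsConstructionPair g γ) (a y : X) : γ (g⁻¹ a) y = g (γ a y) := by
  rw [← Equiv.Perm.inv_eq_iff_eq, h.c3, ← Equiv.Perm.mul_apply, mul_inv_cancel,
    Equiv.Perm.one_apply]

theorem zpow_apply_left (h : IsConstructionPair g γ) (m : ℤ) (a y : X) :
    γ ((g ^ m) a) y = (g ^ (-m)) (γ a y) := by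
  induction m using Int.induction_on with
  | zero => simp
  | succ m ih =>
    rw [add_comm, zpow_one_add, Equiv.Perm.mul_apply, h.apply_left, ih,
      ← Equiv.Perm.mul_apply, ← zpow_neg_one, ← zpow_add, neg_add]
  | pred m ih =>
    rw [sub_eq_neg_add, zpow_add, zpow_neg_one, Equiv.Perm.mul_apply, h.inv_apply_left, ih,
      ← Equiv.Perm.mul_apply, ← zpow_one_add, neg_add, neg_neg, neg_neg]

theorem zpow_apply_right (h : IsConstructionPair g γ) (m : ℤ) (a y : X) :
    γ a ((g ^ m) y) = (g ^ (-m)) (γ a y) := by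
  rw [h.symm, h.zpow_apply_left, h.symm]

theorem sum_left (h : IsConstructionPair g γ) {ι : Type*} (s : Finset ι) (f : ι → X) (y : X) :
    γ (∑ k ∈ s, f k) y = ∑ k ∈ s, γ (f k) y :=
  map_sum (AddMonoidHom.mk' (γ · y) (h.add_left · · y)) f s

theorem sum_Ico_zpow_neg (h : IsConstructionPair g γ) (a b : ℤ) (x y : X) :
    ∑ k ∈ Finset.Ico a b, (g ^ (-k)) (γ x y)
      = γ (∑ k ∈ Finset.range (b - a).toNat, (g ^ k) x) ((g ^ a) y) := by
  rw [Int.Ico_eq_finset_map, Finset.sum_map, h.sum_left]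
  refine Finset.sum_congr rfl fun k _ => ?_
  rw [← zpow_natCast, h.zpow_apply_left, h.zpow_apply_right, ← Equiv.Perm.mul_apply,
    ← zpow_add]
  simp [add_comm]

theorem sum_I_zpow_neg (h : IsConstructionPair g γ) (i n : ℤ) (x y : X) :
    ∑ k ∈ I i (i + n), (g ^ (-k)) (γ x y)
      = γ (∑ k ∈ Finset.range n.natAbs, (g ^ k) x) ((g ^ min i (i + n)) y) := by
  rw [I, h.sum_Ico_zpow_neg]
  congr 4
  omega

theorem forall_sum_I_zpow_neg_eq_zero_iff (h : IsConstructionPair g γ) (i n : ℤ) (x : X) :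
    (∀ y, ∑ k ∈ I i (i + n), (g ^ (-k)) (γ x y) = 0)
      ↔ ∑ k ∈ Finset.range n.natAbs, (g ^ k) x ∈ radical γ := by
  simp only [h.sum_I_zpow_neg]
  exact (g ^ min i (i + n)).forall_congr_right (q := (γ _ · = 0))

end IsConstructionPair

theorem stmt_5 {X : Type*} [AddCommGroup X] (g : Equiv.Perm X) (γ : X → X → X)
    (h : IsConstructionPair g γ) (n : ℤ) (x : X) :
    ((∑ k ∈ Finset.range n.natAbs, (g ^ k) x ∈ radical γ)
        ↔ (∀ y : X, ∑ k ∈ I 0 n, (g ^ (-k)) (γ x y) = 0)) ∧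
    ((∀ y : X, ∑ k ∈ I 0 n, (g ^ (-k)) (γ x y) = 0)
        ↔ (∀ (y : X) (i : ℤ), ∑ k ∈ I i (i + n), (g ^ (-k)) (γ x y) = 0)) := by
  have hI : ∀ i, (∀ y, ∑ k ∈ I i (i + n), (g ^ (-k)) (γ x y) = 0)
      ↔ ∑ k ∈ Finset.range n.natAbs, (g ^ k) x ∈ radical γ :=
    fun i => h.forall_sum_I_zpow_neg_eq_zero_iff i n x
  have h0 := hI 0
  rw [zero_add] at h0
  rw [h0, forall_comm]
  simp only [hI, forall_const, iff_self, and_true]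
end

section
/- Let (g,γ) be a construction pair on an abelian group (X,+), and equip ℤ × X with the multiplication (i,x)·(j,y) = (i+j, g^{−j}(x)+y+∑_{k∈I(i+j,−j)} g^{−k}(γ(x,y))). If this multiplication is commutative (u·v = v·u for all u,v ∈ ℤ × X), then it is associative ((u·v)·w = u·(v·w) for all u,v,w ∈ ℤ × X). -/
/-- The multiplication of `ℤ ⋉_{(g,γ)} X` on `ℤ × X`:
`(i,x)·(j,y) = (i+j, g^{-j}(x) + y + ∑_{k ∈ I(i+j,-j)} g^{-k}(γ(x,y)))`. -/
noncomputable def cmul {X : Type*} [AddCommGroup X] (g : Equiv.Perm X) (γ : X → X → X) :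
    ℤ × X → ℤ × X → ℤ × X :=
  fun u v =>
    (u.1 + v.1,
      (g ^ (-v.1)) u.2 + v.2 + ∑ k ∈ I (u.1 + v.1) (-v.1), (g ^ (-k)) (γ u.2 v.2))

/-! Commuting `(1,x)` past `(0,y)` gives `x + y + γ(x,y) = g⁻¹(y) + x + g(γ(y,x)) + γ(y,x)`.
Taking `x = y` shows that `g⁻¹` is the translation by `-g(0)`; then, by symmetry of `γ`,
the identity forces `γ = 0`. With `γ = 0`, commuting `(-1,0)` past `(0,y)` gives `g(y) = y`,
so the multiplication is the addition of `ℤ × X`, which is associative. -/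

section

variable {X : Type*} [AddCommGroup X] (g : Equiv.Perm X) (γ : X → X → X)

lemma snd_cmul_one_zero (x y : X) : (cmul g γ (1, x) (0, y)).2 = x + y + γ x y := by
  have hI : I 1 0 = {0} := by decide
  simp [cmul, hI, ← Equiv.Perm.inv_def]

lemma snd_cmul_zero_one (x y : X) :
    (cmul g γ (0, y) (1, x)).2 = g⁻¹ y + x + (g (γ y x) + γ y x) := by
  have hI : I 1 (-1) = {-1, 0} := by decide
  simp [cmul, hI, ← Equiv.Perm.inv_def]

lemma snd_cmul_neg_one_zero (x y : X) :
    (cmul g γ (-1, x) (0, y)).2 = x + y + g (γ x y) := by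
  have hI : I (-1) 0 = {-1} := by decide
  simp [cmul, hI, ← Equiv.Perm.inv_def]

lemma snd_cmul_zero_neg_one (x y : X) :
    (cmul g γ (0, y) (-1, x)).2 = g y + x + (g (γ y x) + γ y x) := by
  have hI : I (-1) 1 = {-1, 0} := by decide
  simp [cmul, hI, ← Equiv.Perm.inv_def]

variable {g γ}

lemma IsConstructionPair.gamma_eq_zero_of_comm (h : IsConstructionPair g γ)
    (hcomm : ∀ u v : ℤ × X, cmul g γ u v = cmul g γ v u) (x y : X) : γ x y = 0 := by
  have key : ∀ x y : X, x + y + γ x y = g⁻¹ y + x + (g (γ y x) + γ y x) := fun x y => by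
    rw [← snd_cmul_one_zero, ← snd_cmul_zero_one, hcomm]
  have hinv : ∀ y : X, g⁻¹ y = y - g 0 := fun y => by
    have hyy := key y y
    rw [h.alt] at hyy
    linear_combination (norm := abel) -hyy
  have hxy := key x y
  rw [h.symm y x, hinv y] at hxy
  exact g.injective (by linear_combination (norm := abel) -hxy)

lemma eq_one_of_gamma_eq_zero_of_comm (hγ : ∀ x y, γ x y = 0)
    (hcomm : ∀ u v : ℤ × X, cmul g γ u v = cmul g γ v u) : g = 1 := by
  ext y
  have hy : g y + 0 + (g (γ y 0) + γ y 0) = 0 + y + g (γ 0 y) := by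
    rw [← snd_cmul_neg_one_zero, ← snd_cmul_zero_neg_one, hcomm]
  simpa [hγ] using hy

lemma cmul_one_of_gamma_eq_zero (hγ : ∀ x y, γ x y = 0) (u v : ℤ × X) :
    cmul 1 γ u v = u + v := by
  simp [cmul, hγ, Prod.add_def]

lemma IsConstructionPair.cmul_eq_add_of_comm (h : IsConstructionPair g γ)
    (hcomm : ∀ u v : ℤ × X, cmul g γ u v = cmul g γ v u) (u v : ℤ × X) :
    cmul g γ u v = u + v := by
  have hγ := h.gamma_eq_zero_of_comm hcomm
  rw [eq_one_of_gamma_eq_zero_of_comm hγ hcomm, cmul_one_of_gamma_eq_zero hγ]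

end

theorem stmt_13 {X : Type*} [AddCommGroup X] (g : Equiv.Perm X) (γ : X → X → X)
    (h : IsConstructionPair g γ)
    (hcomm : ∀ u v : ℤ × X, cmul g γ u v = cmul g γ v u) :
    ∀ u v w : ℤ × X, cmul g γ (cmul g γ u v) w = cmul g γ u (cmul g γ v w) := by
  intro u v w
  simp only [h.cmul_eq_add_of_comm hcomm, add_assoc]
end

section
/- Let (X,+) be an abelian group and f a semiautomorphism of (X,+) such that for every x ∈ X the map μ_x : X → X, μ_x(z) = f⁻¹(f(z)+f(x))−x, is additive. Define x⊕y = f⁻¹(f(x)+f(y)). Then: (i) (X,⊕) is an abelian group with identity element 0 and inverse of x equal to −x, and f is an isomorphism from (X,⊕) onto (X,+); (ii) x⊕y = μ_y(x)+y = x+μ_x(y) for all x,y; (iii) μ_x(x) = x, μ_x(z+x) = μ_x(z)+x, and μ_x(z) = f⁻¹(f(z−x)+f(x)) for all x,z; (iv) x+y = x⊕μ_x(y) for all x,y. -/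
/-! `x ⊕ y = f⁻¹ (f x + f y)` is `+` transported along `f`, so (i) is formal apart from the
inverse: putting `(-x, x)` and `(x, 0)` into `f (x + y + x) = f x + f y + f x` shows that `f`
commutes with negation and with doubling. Doubling gives `μ_x x = x`; with additivity of
`μ_x` this gives `μ_x (z + x) = μ_x z + x`, hence `μ_x z = μ_x (z - x) + x`, which is
`f⁻¹ (f (z - x) + f x)`. Then (iv) is the semiautomorphism identity applied to `x`, `y - x`. -/

section Semiautomorphism

variable {X Y : Type*} [AddCommGroup X] [AddCommGroup Y] {f : X ≃ Y}

theorem map_neg_of_map_add_add_self (hf : ∀ x y : X, f (x + y + x) = f x + f y + f x) (x : X) :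
    f (-x) = -f x := by
  have h := hf (-x) x
  rw [neg_add_cancel, zero_add, add_assoc, left_eq_add] at h
  exact (neg_eq_of_add_eq_zero_right h).symm

theorem symm_apply_add_self_of_map_add_add_self (hf0 : f 0 = 0)
    (hf : ∀ x y : X, f (x + y + x) = f x + f y + f x) (x : X) :
    f.symm (f x + f x) = x + x := by
  have h := hf x 0
  rw [add_zero, hf0, add_zero] at h
  rw [f.symm_apply_eq, h]

theorem mu_self (hf0 : f 0 = 0) (hf : ∀ x y : X, f (x + y + x) = f x + f y + f x)
    {μ : X → X → X} (hμ : ∀ x z : X, μ x z = f.symm (f z + f x) - x) (x : X) :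
    μ x x = x := by
  rw [hμ, symm_apply_add_self_of_map_add_add_self hf0 hf, add_sub_cancel_right]

theorem mu_eq_symm_apply_sub_add (hf0 : f 0 = 0)
    (hf : ∀ x y : X, f (x + y + x) = f x + f y + f x)
    {μ : X → X → X} (hμ : ∀ x z : X, μ x z = f.symm (f z + f x) - x)
    (hμadd : ∀ x a b : X, μ x (a + b) = μ x a + μ x b) (x z : X) :
    μ x z = f.symm (f (z - x) + f x) := by
  calc μ x z = μ x (z - x) + μ x x := by rw [← hμadd, sub_add_cancel]
    _ = f.symm (f (z - x) + f x) := by rw [mu_self hf0 hf hμ, hμ, sub_add_cancel]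

theorem add_eq_symm_apply_add_mu (hf0 : f 0 = 0)
    (hf : ∀ x y : X, f (x + y + x) = f x + f y + f x)
    {μ : X → X → X} (hμ : ∀ x z : X, μ x z = f.symm (f z + f x) - x)
    (hμadd : ∀ x a b : X, μ x (a + b) = μ x a + μ x b) (x y : X) :
    x + y = f.symm (f x + f (μ x y)) := by
  rw [mu_eq_symm_apply_sub_add hf0 hf hμ hμadd, f.apply_symm_apply, ← add_assoc, ← hf,
    f.symm_apply_apply, add_sub_cancel, add_comm]

end Semiautomorphism

theorem stmt_14 {X : Type*} [AddCommGroup X] (f : Equiv.Perm X)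
    (hf0 : f 0 = 0)
    (hf : ∀ x y : X, f (x + y + x) = f x + f y + f x)
    (μ : X → X → X)
    (hμ : ∀ x z : X, μ x z = f⁻¹ (f z + f x) - x)
    (hμadd : ∀ x a b : X, μ x (a + b) = μ x a + μ x b)
    (op : X → X → X)
    (hop : ∀ x y : X, op x y = f⁻¹ (f x + f y)) :
    -- (i) (X, ⊕) is an abelian group with identity 0 and inverses -x,
    --     and f is an isomorphism from (X, ⊕) onto (X, +)
    ((∀ x y : X, op x y = op y x) ∧
     (∀ x y z : X, op (op x y) z = op x (op y z)) ∧
     (∀ x : X, op x 0 = x ∧ op 0 x = x) ∧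
     (∀ x : X, op x (-x) = 0) ∧
     (∀ x y : X, f (op x y) = f x + f y)) ∧
    -- (ii)
    (∀ x y : X, op x y = μ y x + y ∧ op x y = x + μ x y) ∧
    -- (iii)
    ((∀ x : X, μ x x = x) ∧
     (∀ x z : X, μ x (z + x) = μ x z + x) ∧
     (∀ x z : X, μ x z = f⁻¹ (f (z - x) + f x))) ∧
    -- (iv)
    (∀ x y : X, x + y = op x (μ x y)) := by
  simp only [Equiv.Perm.coe_inv] at hμ hop ⊢
  refine ⟨⟨fun x y => ?_, fun x y z => ?_, fun x => ⟨?_, ?_⟩, fun x => ?_, fun x y => ?_⟩,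
    fun x y => ⟨?_, ?_⟩,
    ⟨mu_self hf0 hf hμ, fun x z => ?_, mu_eq_symm_apply_sub_add hf0 hf hμ hμadd⟩,
    fun x y => ?_⟩
  · rw [hop, hop, add_comm]
  · simp only [hop, f.apply_symm_apply, add_assoc]
  · rw [hop, hf0, add_zero, f.symm_apply_apply]
  · rw [hop, hf0, zero_add, f.symm_apply_apply]
  · rw [hop, map_neg_of_map_add_add_self hf, add_neg_cancel, f.symm_apply_eq, hf0]
  · rw [hop, f.apply_symm_apply]
  · rw [hop, hμ, sub_add_cancel]
  · rw [hop, hμ, add_comm (f x), add_sub_cancel]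
  · rw [hμadd, mu_self hf0 hf hμ]
  · rw [hop, add_eq_symm_apply_add_mu hf0 hf hμ hμadd]
end

section
/- Let (X,+) be an abelian group and f a semiautomorphism of (X,+) such that for every x ∈ X the map μ_x : X → X, μ_x(z) = f⁻¹(f(z)+f(x))−x, is additive. Define x⊕y = f⁻¹(f(x)+f(y)). Then: (i) μ_x ∘ μ_x = id, μ_{−x} = μ_x, and μ_x ∘ μ_y = μ_{x⊕y} for all x,y ∈ X; (ii) (∀x,y ∈ X, μ_x ∘ μ_y = μ_{x+y}) holds if and only if μ_x(y⊕z) = μ_x(y) ⊕ μ_x(z) for all x,y,z ∈ X; (iii) if ∀x,y ∈ X, μ_x ∘ μ_y = μ_{x+y}, then μ_{μ_y(x)−x} = id for all x,y ∈ X. -/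
/-!
Write `x ⊕ y = f⁻¹ (f x + f y)`, so that `μ_x z = (z ⊕ x) - x`. Applying `f` to `x + x + w`
shows that also `μ_x z = x + (z ⊕ -x)`; with these two expressions of `μ_x` and its additivity,
the identities (i) are direct computations. If each `μ_x` respects `⊕`, then
`μ_a ∘ μ_b ∘ μ_a = μ_{μ_a b}`. This conjugation formula, together with `μ_x ∘ μ_y = μ_{x ⊕ y}`
and `x ⊕ y = μ_x y + x`, gives both directions of (ii), and then (iii), because the `μ_x`
commute and are involutions.
-/

section

variable {X : Type*} [AddCommGroup X]

structure IsSemiautomorphism (f : Equiv.Perm X) : Prop where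
  map_zero : f 0 = 0
  map_add_add : ∀ x y : X, f (x + y + x) = f x + f y + f x

namespace IsSemiautomorphism

variable {f : Equiv.Perm X}

theorem map_neg (hs : IsSemiautomorphism f) (x : X) : f (-x) = -f x := by
  have h := hs.map_add_add x (-x)
  rw [add_neg_cancel, zero_add] at h
  have h' : f x + f (-x) + f x = f x + -f x + f x := by rw [← h]; abel
  exact add_left_cancel (add_right_cancel h')

theorem map_add_add_self (hs : IsSemiautomorphism f) (x w : X) :
    f (x + x + w) = f x + f x + f w := by
  rw [show x + x + w = x + w + x by abel, hs.map_add_add]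
  abel

theorem map_add_self (hs : IsSemiautomorphism f) (x : X) : f (x + x) = f x + f x := by
  simpa [hs.map_zero] using hs.map_add_add_self x 0

end IsSemiautomorphism

variable (f : Equiv.Perm X)

def oplus (x y : X) : X := f⁻¹ (f x + f y)

def mu (x z : X) : X := f⁻¹ (f z + f x) - x

def MuAdditive : Prop :=
  ∀ x a b : X, mu f x (a + b) = mu f x a + mu f x b

variable {f}

@[simp]
theorem apply_oplus (x y : X) : f (oplus f x y) = f x + f y :=
  f.apply_symm_apply _

theorem oplus_comm (x y : X) : oplus f x y = oplus f y x := by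
  rw [oplus, oplus, add_comm]

theorem mu_add_eq_oplus (x y : X) : mu f x y + x = oplus f x y := by
  rw [mu, sub_add_cancel, oplus_comm]
  rfl

theorem mu_eq_add_oplus_neg (hs : IsSemiautomorphism f) (x z : X) :
    mu f x z = x + oplus f z (-x) := by
  have h : f⁻¹ (f z + f x) = x + x + oplus f z (-x) := by
    rw [Equiv.Perm.inv_eq_iff_eq, hs.map_add_add_self, apply_oplus, hs.map_neg]
    abel
  rw [mu, h]
  abel

theorem mu_oplus_self (hs : IsSemiautomorphism f) (x z : X) : mu f x (oplus f z x) = x + z := by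
  have h : f⁻¹ (f (oplus f z x) + f x) = x + x + z := by
    rw [Equiv.Perm.inv_eq_iff_eq, hs.map_add_add_self, apply_oplus]
    abel
  rw [mu, h]
  abel

theorem mu_self_s15 (hs : IsSemiautomorphism f) (x : X) : mu f x x = x := by
  rw [mu, ← hs.map_add_self, Equiv.Perm.inv_eq_iff_eq.mpr rfl, add_sub_cancel_right]

theorem mu_neg_left (hs : IsSemiautomorphism f) (x z : X) : mu f (-x) z = mu f x z := by
  rw [mu_eq_add_oplus_neg hs, neg_neg, mu, oplus]
  abel

def muHom (hadd : MuAdditive f) (x : X) : X →+ X :=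
  AddMonoidHom.mk' (mu f x) (hadd x)

theorem mu_neg_right (hadd : MuAdditive f) (x a : X) : mu f x (-a) = -mu f x a :=
  map_neg (muHom hadd x) a

theorem mu_sub_right (hadd : MuAdditive f) (x a b : X) : mu f x (a - b) = mu f x a - mu f x b :=
  map_sub (muHom hadd x) a b

theorem mu_mu_self (hs : IsSemiautomorphism f) (hadd : MuAdditive f) (x z : X) :
    mu f x (mu f x z) = z := by
  change mu f x (oplus f z x - x) = z
  rw [mu_sub_right hadd, mu_oplus_self hs, mu_self_s15 hs, add_sub_cancel_left]

theorem mu_mu_eq_mu_oplus (hs : IsSemiautomorphism f) (hadd : MuAdditive f) (x y z : X) :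
    mu f x (mu f y z) = mu f (oplus f x y) z := by
  have h : oplus f (oplus f z (-y)) (-x) = oplus f z (-oplus f x y) :=
    f.injective <| by simp only [apply_oplus, hs.map_neg]; abel
  rw [mu_eq_add_oplus_neg hs y, hadd, mu_eq_add_oplus_neg hs x (oplus f z (-y)), ← add_assoc,
    mu_add_eq_oplus, h, ← mu_eq_add_oplus_neg hs]

theorem mu_mu_comm (hs : IsSemiautomorphism f) (hadd : MuAdditive f) (x y z : X) :
    mu f x (mu f y z) = mu f y (mu f x z) := by
  rw [mu_mu_eq_mu_oplus hs hadd, mu_mu_eq_mu_oplus hs hadd, oplus_comm]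

theorem mu_mu_mu_of_map_oplus (hs : IsSemiautomorphism f) (hadd : MuAdditive f)
    (hop : ∀ x y z : X, mu f x (oplus f y z) = oplus f (mu f x y) (mu f x z)) (a b w : X) :
    mu f a (mu f b (mu f a w)) = mu f (mu f a b) w := by
  rw [mu_eq_add_oplus_neg hs b, hadd, hop, mu_mu_self hs hadd, mu_neg_right hadd]
  exact (mu_eq_add_oplus_neg hs _ _).symm

theorem map_oplus_of_mu_mu_eq_mu_add (hs : IsSemiautomorphism f) (hadd : MuAdditive f)
    (H : ∀ x y z : X, mu f x (mu f y z) = mu f (x + y) z) (x y z : X) :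
    mu f x (oplus f y z) = oplus f (mu f x y) (mu f x z) := by
  rw [← mu_add_eq_oplus y, hadd, ← mu_add_eq_oplus, H, H (mu f x y), mu_add_eq_oplus,
    ← mu_mu_eq_mu_oplus hs hadd, H]

theorem mu_mu_eq_mu_add_of_map_oplus (hs : IsSemiautomorphism f) (hadd : MuAdditive f)
    (hop : ∀ x y z : X, mu f x (oplus f y z) = oplus f (mu f x y) (mu f x z)) (x y z : X) :
    mu f x (mu f y z) = mu f (x + y) z :=
  calc mu f x (mu f y z) = mu f x (mu f y (mu f x (mu f x z))) := by rw [mu_mu_self hs hadd x z]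
    _ = mu f x (mu f (oplus f y x) (mu f x z)) := by rw [mu_mu_eq_mu_oplus hs hadd y x]
    _ = mu f (mu f x (oplus f y x)) z := mu_mu_mu_of_map_oplus hs hadd hop x _ z
    _ = mu f (x + y) z := by rw [mu_oplus_self hs]

theorem mu_mu_eq_mu_add_iff_map_oplus (hs : IsSemiautomorphism f) (hadd : MuAdditive f) :
    (∀ x y z : X, mu f x (mu f y z) = mu f (x + y) z) ↔
      ∀ x y z : X, mu f x (oplus f y z) = oplus f (mu f x y) (mu f x z) :=
  ⟨map_oplus_of_mu_mu_eq_mu_add hs hadd, mu_mu_eq_mu_add_of_map_oplus hs hadd⟩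

theorem mu_mu_sub_eq_self (hs : IsSemiautomorphism f) (hadd : MuAdditive f)
    (H : ∀ x y z : X, mu f x (mu f y z) = mu f (x + y) z) (x y z : X) :
    mu f (mu f y x - x) z = z :=
  calc mu f (mu f y x - x) z = mu f (mu f y x) (mu f x z) := by
        rw [sub_eq_add_neg, ← H, mu_neg_left hs]
    _ = mu f y (mu f x (mu f y (mu f x z))) :=
        (mu_mu_mu_of_map_oplus hs hadd (map_oplus_of_mu_mu_eq_mu_add hs hadd H) y x _).symm
    _ = z := by rw [mu_mu_comm hs hadd x y, mu_mu_self hs hadd, mu_mu_self hs hadd]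

end

theorem stmt_15 {X : Type*} [AddCommGroup X] (f : Equiv.Perm X)
    (hf0 : f 0 = 0)
    (hf : ∀ x y : X, f (x + y + x) = f x + f y + f x)
    (μ : X → X → X)
    (hμ : ∀ x z : X, μ x z = f⁻¹ (f z + f x) - x)
    (hμadd : ∀ x a b : X, μ x (a + b) = μ x a + μ x b)
    (op : X → X → X)
    (hop : ∀ x y : X, op x y = f⁻¹ (f x + f y)) :
    -- (i)
    ((∀ x z : X, μ x (μ x z) = z) ∧
     (∀ x z : X, μ (-x) z = μ x z) ∧
     (∀ x y z : X, μ x (μ y z) = μ (op x y) z)) ∧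
    -- (ii)
    ((∀ x y z : X, μ x (μ y z) = μ (x + y) z)
        ↔ (∀ x y z : X, μ x (op y z) = op (μ x y) (μ x z))) ∧
    -- (iii)
    ((∀ x y z : X, μ x (μ y z) = μ (x + y) z) →
      ∀ x y z : X, μ (μ y x - x) z = z) := by
  have hs : IsSemiautomorphism f := ⟨hf0, hf⟩
  obtain rfl : μ = mu f := funext fun x => funext (hμ x)
  obtain rfl : op = oplus f := funext fun x => funext (hop x)
  exact ⟨⟨mu_mu_self hs hμadd, mu_neg_left hs, mu_mu_eq_mu_oplus hs hμadd⟩,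
    mu_mu_eq_mu_add_iff_map_oplus hs hμadd, mu_mu_sub_eq_self hs hμadd⟩
end

section
/- Let (f,β) be a Moufang pair on an abelian group (X,+). Then for all x,y ∈ X and all integers i,j: β(f^i(x), f^i(y)) = f^i(β(f^{3i}(x), y)) and β(f^{3i}(x), f^{3j}(y)) = f^{−3(i+j)}(β(x,y)), where f^k denotes the k-th iterate of the bijection f (negative iterates via the inverse bijection). -/
namespace Equiv.Perm

theorem map_zpow_apply_zpow_apply {α γ δ : Type*} {σ : Perm α} {ρ : Perm γ} {τ : Perm δ}
    (φ : α → γ → δ) (h : ∀ a c, φ (σ a) (ρ c) = τ (φ a c)) (n : ℤ) (a : α) (c : γ) :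
    φ ((σ ^ n) a) ((ρ ^ n) c) = (τ ^ n) (φ a c) := by
  induction n using Int.induction_on generalizing a c with
  | zero => simp
  | succ n ih => simp only [zpow_add_one, mul_apply, h, ih]
  | pred n ih =>
    have h_inv : ∀ a c, φ (σ⁻¹ a) (ρ⁻¹ c) = τ⁻¹ (φ a c) := fun a c => by
      rw [eq_inv_iff_eq, ← h]
      simp
    simp only [zpow_sub_one, mul_apply, h_inv, ih]

theorem map_zpow_apply {α γ δ : Type*} {σ : Perm α} {τ : Perm δ} (φ : α → γ → δ)
    (h : ∀ a c, φ (σ a) c = τ (φ a c)) (n : ℤ) (a : α) (c : γ) :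
    φ ((σ ^ n) a) c = (τ ^ n) (φ a c) := by
  simpa using map_zpow_apply_zpow_apply (ρ := 1) φ h n a c

theorem zpow_three_apply {α : Type*} (f : Perm α) (a : α) : (f ^ (3 : ℤ)) a = f (f (f a)) := by
  simp [zpow_ofNat, pow_succ]

end Equiv.Perm

open Equiv

/-- Conditions (P1) and (P3) of a Moufang pair `(f, β)`. -/
structure IsP1P3Pair {X : Type*} [AddCommGroup X] (f : Perm X) (β : X → X → X) : Prop where
  β_eq : ∀ x y, β x y = f⁻¹ (f x + f y) - x - y
  β_self : ∀ x, β x x = 0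
  β_add_left : ∀ x y z, β (x + y) z = β x z + β y z
  β_add_right : ∀ x y z, β x (y + z) = β x y + β x z
  β_apply_apply : ∀ x y, β (f x) (f y) = f (β (f (f (f x))) y)

namespace IsP1P3Pair

variable {X : Type*} [AddCommGroup X] {f : Perm X} {β : X → X → X}

theorem β_neg_right (h : IsP1P3Pair f β) (a b : X) : β a (-b) = -β a b :=
  (AddMonoidHom.mk' (β a) (h.β_add_right a)).map_neg b

theorem β_antisymm (h : IsP1P3Pair f β) (a b : X) : β a b = -β b a := by
  have h_sum := h.β_self (a + b)
  rw [h.β_add_left, h.β_add_right, h.β_add_right, h.β_self, h.β_self, zero_add, add_zero] at h_sum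
  exact eq_neg_of_add_eq_zero_left h_sum

theorem apply_add_add_β (h : IsP1P3Pair f β) (a b : X) : f (a + b + β a b) = f a + f b :=
  Perm.eq_inv_iff_eq.mp (by rw [h.β_eq]; abel)

theorem map_zero (h : IsP1P3Pair f β) : f 0 = 0 := by
  simpa [h.β_self] using h.apply_add_add_β 0 0

theorem map_neg (h : IsP1P3Pair f β) (a : X) : f (-a) = -f a := by
  have h_sum := h.apply_add_add_β a (-a)
  rw [h.β_neg_right, h.β_self, neg_zero, add_zero, add_neg_cancel, h.map_zero] at h_sum
  exact eq_neg_of_add_eq_zero_right h_sum.symm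

theorem zpow_apply_neg (h : IsP1P3Pair f β) (n : ℤ) (a : X) : (f ^ n) (-a) = -(f ^ n) a := by
  have h_comm : Commute f (Equiv.neg X) := Equiv.ext h.map_neg
  exact congr($((h_comm.zpow_left n).eq) a)

theorem β_zpow_three_left_comm (h : IsP1P3Pair f β) (a b : X) :
    β ((f ^ (3 : ℤ)) a) b = β a ((f ^ (3 : ℤ)) b) := by
  apply f.injective
  rw [Perm.zpow_three_apply, Perm.zpow_three_apply, ← h.β_apply_apply, h.β_antisymm a, h.map_neg,
    ← h.β_apply_apply, ← h.β_antisymm]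

theorem β_zpow_two_left_inv_right (h : IsP1P3Pair f β) (a b : X) :
    β ((f ^ (2 : ℤ)) a) (f⁻¹ b) = f⁻¹ (β a b) := by
  have h_P3 := h.β_apply_apply (f⁻¹ a) (f⁻¹ b)
  simp only [Perm.coe_inv, apply_symm_apply] at h_P3
  rw [Perm.eq_inv_iff_eq, h_P3]
  simp [zpow_ofNat, sq]

theorem β_zpow_three_left (h : IsP1P3Pair f β) (a b : X) :
    β ((f ^ (3 : ℤ)) a) b = (f ^ (-3 : ℤ)) (β a b) := by
  have h_iter := Perm.map_zpow_apply_zpow_apply β h.β_zpow_two_left_inv_right 3 a b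
  rw [← zpow_mul, inv_zpow', show (2 : ℤ) * 3 = 3 + 3 by norm_num, zpow_add, Perm.mul_apply,
    h.β_zpow_three_left_comm, ← Perm.mul_apply, ← zpow_add] at h_iter
  simpa using h_iter

theorem β_apply_apply_eq (h : IsP1P3Pair f β) (a b : X) :
    β (f a) (f b) = (f ^ (-2 : ℤ)) (β a b) := by
  rw [h.β_apply_apply, ← Perm.zpow_three_apply, h.β_zpow_three_left, ← Perm.mul_apply,
    ← zpow_one_add]
  norm_num

theorem β_zpow_three_mul_left (h : IsP1P3Pair f β) (n : ℤ) (a b : X) :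
    β ((f ^ (3 * n)) a) b = (f ^ (-(3 * n))) (β a b) := by
  rw [zpow_mul, Perm.map_zpow_apply β h.β_zpow_three_left, ← zpow_mul, neg_mul]

theorem β_zpow_zpow (h : IsP1P3Pair f β) (n : ℤ) (a b : X) :
    β ((f ^ n) a) ((f ^ n) b) = (f ^ (-2 * n)) (β a b) := by
  rw [Perm.map_zpow_apply_zpow_apply β h.β_apply_apply_eq, ← zpow_mul]

end IsP1P3Pair

theorem stmt_17_general {X : Type*} [AddCommGroup X] (f : Equiv.Perm X) (β : X → X → X)
    (hβ : ∀ x y : X, β x y = f⁻¹ (f x + f y) - x - y)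
    (halt : ∀ x : X, β x x = 0)
    (haddl : ∀ x y z : X, β (x + y) z = β x z + β y z)
    (haddr : ∀ x y z : X, β x (y + z) = β x y + β x z)
    (hP3 : ∀ x y : X, β (f x) (f y) = f (β (f (f (f x))) y))
    (i j : ℤ) (x y : X) :
    β ((f ^ i) x) ((f ^ i) y) = (f ^ i) (β ((f ^ (3 * i)) x) y) ∧
    β ((f ^ (3 * i)) x) ((f ^ (3 * j)) y) = (f ^ (-(3 * (i + j)))) (β x y) := by
  have h : IsP1P3Pair f β := ⟨hβ, halt, haddl, haddr, hP3⟩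
  constructor
  · rw [h.β_zpow_zpow, h.β_zpow_three_mul_left, ← Perm.mul_apply, ← zpow_add]
    ring_nf
  · rw [h.β_zpow_three_mul_left, h.β_antisymm, h.β_zpow_three_mul_left, h.β_antisymm y]
    simp only [h.zpow_apply_neg, neg_neg, ← Perm.mul_apply, ← zpow_add]
    ring_nf

theorem stmt_17 {X : Type*} [AddCommGroup X] (f : Equiv.Perm X) (β : X → X → X)
    (hβ : ∀ x y : X, β x y = f⁻¹ (f x + f y) - x - y)
    (halt : ∀ x : X, β x x = 0)
    (haddl : ∀ x y z : X, β (x + y) z = β x z + β y z)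
    (haddr : ∀ x y z : X, β x (y + z) = β x y + β x z)
    (hP2 : ∀ x y z : X, β (β x y) z = 0)
    (hP3 : ∀ x y : X, β (f x) (f y) = f (β (f (f (f x))) y))
    (i j : ℤ) (x y : X) :
    β ((f ^ i) x) ((f ^ i) y) = (f ^ i) (β ((f ^ (3 * i)) x) y) ∧
    β ((f ^ (3 * i)) x) ((f ^ (3 * j)) y) = (f ^ (-(3 * (i + j)))) (β x y) :=
  stmt_17_general f β hβ halt haddl haddr hP3 i j x y
end

section
/- Let (f,β) be a Moufang pair on an abelian group (X,+). Then for every integer i and all x,y ∈ X, f^{−i}(f^i(x)+f^i(y)) = x + y + ∑_{k∈I(0,i)} f^{−3k}(β(x,y)). -/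
theorem eq_add_sum_I_zero_of_succ {A : Type*} [AddCommGroup A] {g d : ℤ → A}
    (hstep : ∀ n, g (n + 1) = g n + d n) (hd : ∀ n, -d n = d n) (i : ℤ) :
    g i = g 0 + ∑ k ∈ I 0 i, d k := by
  induction i using Int.induction_on with
  | zero => simp [I]
  | succ n ih =>
    have hI : I 0 (n + 1) = insert (n : ℤ) (I 0 n) := by
      ext k; simp only [I, Finset.mem_Ico, Finset.mem_insert]; omega
    rw [hI, Finset.sum_insert (by simp [I]), hstep, ih]
    abel
  | pred n ih =>
    have hI : I 0 (-n - 1) = insert (-n - 1 : ℤ) (I 0 (-n)) := by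
      ext k; simp only [I, Finset.mem_Ico, Finset.mem_insert]; omega
    have hs := hstep (-n - 1)
    rw [sub_add_cancel] at hs
    rw [hI, Finset.sum_insert (by simp [I]), eq_sub_of_add_eq hs.symm, ih, sub_eq_add_neg, hd]
    abel

namespace MoufangPerm

variable {X : Type*} {f : Equiv.Perm X} {β : X → X → X}
variable (hP3 : ∀ x y : X, β (f x) (f y) = f (β (f (f (f x))) y))

include hP3 in
theorem apply_beta (u v : X) : f (β u v) = β (f⁻¹ (f⁻¹ u)) (f v) := by
  simpa using (hP3 (f⁻¹ (f⁻¹ (f⁻¹ u))) v).symm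

include hP3 in
theorem inv_apply_beta (u v : X) : f⁻¹ (β u v) = β (f (f u)) (f⁻¹ v) := by
  simpa using congrArg (⇑f⁻¹) (hP3 (f⁻¹ u) (f⁻¹ v))

include hP3 in
theorem exists_zpow_apply_beta (n : ℤ) (u v : X) : ∃ u' v', (f ^ n) (β u v) = β u' v' := by
  induction n using Int.induction_on generalizing u v with
  | zero => exact ⟨u, v, rfl⟩
  | succ n ih =>
    rw [zpow_add_one, Equiv.Perm.mul_apply, apply_beta hP3]
    exact ih _ _
  | pred n ih =>
    rw [zpow_sub_one, Equiv.Perm.mul_apply, inv_apply_beta hP3]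
    exact ih _ _

variable [AddCommGroup X]
variable (hβ : ∀ x y : X, β x y = f⁻¹ (f x + f y) - x - y)
variable (halt : ∀ x : X, β x x = 0)
variable (haddl : ∀ x y z : X, β (x + y) z = β x z + β y z)
variable (haddr : ∀ x y z : X, β x (y + z) = β x y + β x z)
variable (hP2 : ∀ x y z : X, β (β x y) z = 0)

include hβ in
theorem beta_comm (x y : X) : β x y = β y x := by
  rw [hβ, hβ, add_comm (f x)]
  abel

include hβ halt haddl haddr in
theorem beta_add_self (x y : X) : β x y + β x y = 0 := by
  have h := halt (x + y)
  rwa [haddl, haddr, haddr, halt, halt, beta_comm hβ y x, zero_add, add_zero] at h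

include hβ in
theorem apply_add_apply (x y : X) : f x + f y = f (x + y + β x y) := by
  have h : x + y + β x y = f⁻¹ (f x + f y) := by rw [hβ]; abel
  rw [h]
  exact (f.apply_symm_apply _).symm

include hβ hP2 in
theorem apply_add_beta (a u v : X) : f (a + β u v) = f a + f (β u v) := by
  rw [apply_add_apply hβ, beta_comm hβ a, hP2, add_zero]

include hβ hP2 hP3 in
theorem inv_apply_add_beta (a u v : X) : f⁻¹ (a + β u v) = f⁻¹ a + f⁻¹ (β u v) := by
  apply f.injective
  rw [inv_apply_beta hP3, apply_add_beta hβ hP2, ← inv_apply_beta hP3]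
  simp

include hβ hP2 hP3 in
theorem zpow_apply_add_beta (n : ℤ) (a u v : X) :
    (f ^ n) (a + β u v) = (f ^ n) a + (f ^ n) (β u v) := by
  induction n using Int.induction_on generalizing a u v with
  | zero => rfl
  | succ n ih =>
    simp only [zpow_add_one, Equiv.Perm.mul_apply]
    rw [apply_add_beta hβ hP2, apply_beta hP3, ih]
  | pred n ih =>
    simp only [zpow_sub_one, Equiv.Perm.mul_apply]
    rw [inv_apply_add_beta hP3 hβ hP2, inv_apply_beta hP3, ih]

include hβ hP3 in
theorem beta_apply_cube_left (x y : X) : β (f (f (f x))) y = β x (f (f (f y))) := by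
  have h := hP3 y x
  rw [beta_comm hβ, hP3] at h
  rw [f.injective h, beta_comm hβ]

include hP3 hβ in
theorem beta_apply_apply (x y : X) : β (f x) (f y) = f⁻¹ (f⁻¹ (β x y)) := by
  apply f.injective; apply f.injective
  rw [apply_beta hP3, apply_beta hP3, ← beta_apply_cube_left hP3 hβ]
  simp

include hP3 hβ in
theorem beta_inv_apply_inv_apply (x y : X) : β (f⁻¹ x) (f⁻¹ y) = f (f (β x y)) := by
  apply f⁻¹.injective; apply f⁻¹.injective
  simpa using (beta_apply_apply hP3 hβ (f⁻¹ x) (f⁻¹ y)).symm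

include hP3 hβ in
theorem beta_zpow_apply_zpow_apply (n : ℤ) (x y : X) :
    β ((f ^ n) x) ((f ^ n) y) = (f ^ (-(2 * n))) (β x y) := by
  induction n using Int.induction_on generalizing x y with
  | zero => rfl
  | succ n ih =>
    rw [show -(2 * (n + 1 : ℤ)) = -(2 * n) - 1 - 1 by ring]
    simp only [zpow_add_one, zpow_sub_one, Equiv.Perm.mul_apply]
    rw [ih, beta_apply_apply hP3 hβ]
  | pred n ih =>
    rw [show -(2 * (-n - 1 : ℤ)) = -(2 * -n) + 1 + 1 by ring]
    simp only [zpow_add_one, zpow_sub_one, Equiv.Perm.mul_apply]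
    rw [ih, beta_inv_apply_inv_apply hP3 hβ]

include hP3 hβ halt haddl haddr in
theorem neg_zpow_apply_beta (n : ℤ) (x y : X) : -(f ^ n) (β x y) = (f ^ n) (β x y) := by
  obtain ⟨u, v, h⟩ := exists_zpow_apply_beta hP3 n x y
  rw [h]
  exact neg_eq_of_add_eq_zero_left (beta_add_self hβ halt haddl haddr u v)

include hP3 hβ hP2 in
theorem zpow_neg_succ_apply_add (n : ℤ) (x y : X) :
    (f ^ (-(n + 1))) ((f ^ (n + 1)) x + (f ^ (n + 1)) y)
      = (f ^ (-n)) ((f ^ n) x + (f ^ n) y) + (f ^ (-(3 * n))) (β x y) := by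
  rw [show -(n + 1) = -n - 1 by ring, add_comm n 1, zpow_one_add, zpow_sub_one]
  simp only [Equiv.Perm.mul_apply]
  rw [apply_add_apply hβ, Equiv.Perm.coe_inv, Equiv.symm_apply_apply,
    zpow_apply_add_beta hP3 hβ hP2, beta_zpow_apply_zpow_apply hP3 hβ, ← Equiv.Perm.mul_apply,
    ← zpow_add, show -n + -(2 * n) = -(3 * n) by ring]

end MoufangPerm

open MoufangPerm in
theorem stmt_18 {X : Type*} [AddCommGroup X] (f : Equiv.Perm X) (β : X → X → X)
    (hβ : ∀ x y : X, β x y = f⁻¹ (f x + f y) - x - y)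
    (halt : ∀ x : X, β x x = 0)
    (haddl : ∀ x y z : X, β (x + y) z = β x z + β y z)
    (haddr : ∀ x y z : X, β x (y + z) = β x y + β x z)
    (hP2 : ∀ x y z : X, β (β x y) z = 0)
    (hP3 : ∀ x y : X, β (f x) (f y) = f (β (f (f (f x))) y))
    (i : ℤ) (x y : X) :
    (f ^ (-i)) ((f ^ i) x + (f ^ i) y)
      = x + y + ∑ k ∈ I 0 i, (f ^ (-(3 * k))) (β x y) := by
  simpa using eq_add_sum_I_zero_of_succ (g := fun n => (f ^ (-n)) ((f ^ n) x + (f ^ n) y))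
    (zpow_neg_succ_apply_add hP3 hβ hP2 · x y)
    (fun k => neg_zpow_apply_beta hP3 hβ halt haddl haddr (-(3 * k)) x y) i
end
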